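/- arXiv:1706.03591 — 2 statements merged into one kernel-verified Lean document; each statement's English description precedes it below -/
import Mathlib

section
/- Let M ∈ ℝ^{n×m} and let X be the n×k cluster-indicator matrix of a partition of {1,…,n} into k nonempty clusters c₁,…,c_k. Then ‖M − X Xᵀ M‖_F² = Σ_{j=1}^{k} Σ_{i∈c_j} ‖m_i − μ_j‖₂², where m_i denotes the i-th row of M and μ_j = (1/|c_j|) Σ_{i∈c_j} m_i is the centroid of cluster j. -/
open Matrix MeasureTheory ProbabilityTheory Finset

noncomputable section

/-- The `a × b` matrix with ones on the main diagonal and zeros elsewhere. -/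
def rectId (a b : ℕ) : Matrix (Fin a) (Fin b) ℝ :=
  Matrix.of fun i j => if (i : ℕ) = (j : ℕ) then 1 else 0

/-- Frobenius norm of a real matrix. -/
def frob {a b : ℕ} (M : Matrix (Fin a) (Fin b) ℝ) : ℝ :=
  Real.sqrt (∑ i, ∑ j, (M i j) ^ 2)

/-- Euclidean norm of a vector. -/
def enorm2 {a : ℕ} (v : Fin a → ℝ) : ℝ :=
  Real.sqrt (∑ i, (v i) ^ 2)

/-- `X` is the cluster-indicator matrix of the partition of `Fin n` into the
(nonempty) fibers of the surjective map `f : Fin n → Fin k`. -/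
def IsIndicatorOf {n k : ℕ} (f : Fin n → Fin k) (X : Matrix (Fin n) (Fin k) ℝ) : Prop :=
  Function.Surjective f ∧
    ∀ i j, X i j =
      if f i = j then 1 / Real.sqrt ((Finset.univ.filter fun i' => f i' = j).card) else 0

/-- `X` is a cluster-indicator matrix of a partition into `k` nonempty clusters. -/
def IsIndicator {n k : ℕ} (X : Matrix (Fin n) (Fin k) ℝ) : Prop :=
  ∃ f : Fin n → Fin k, IsIndicatorOf f X

/-- The k-means cost of the assignment `X` on the feature matrix `M`. -/
def kmeansCost {n k m : ℕ} (M : Matrix (Fin n) (Fin m) ℝ)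
    (X : Matrix (Fin n) (Fin k) ℝ) : ℝ :=
  frob (M - X * Xᵀ * M)

/-- `X` minimizes the k-means cost on features `M` over all indicator matrices. -/
def IsOptAssign {n k m : ℕ} (M : Matrix (Fin n) (Fin m) ℝ)
    (X : Matrix (Fin n) (Fin k) ℝ) : Prop :=
  IsIndicator X ∧
    ∀ Y : Matrix (Fin n) (Fin k) ℝ, IsIndicator Y → kmeansCost M X ≤ kmeansCost M Y

/-- Law of an `n × d` random matrix with i.i.d. Gaussian entries of
mean `0` and variance `1 / d`. -/
def gaussMeasure (n d : ℕ) : Measure (Fin n → Fin d → ℝ) :=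
  Measure.pi fun _ => Measure.pi fun _ => gaussianReal 0 (d : NNReal)⁻¹

/-! `X Xᵀ` is the block-diagonal averaging operator: row `i` of `X Xᵀ M` is the centroid of the
cluster of `i`. Hence `M - X Xᵀ M` has the deviations `mᵢ - μ_{f i}` as rows, and summing its
squared entries fiber by fiber gives the right-hand side. -/

lemma frob_sq {a b : ℕ} (M : Matrix (Fin a) (Fin b) ℝ) :
    frob M ^ 2 = ∑ i, ∑ j, M i j ^ 2 :=
  Real.sq_sqrt (by positivity)

lemma enorm2_sq {a : ℕ} (v : Fin a → ℝ) : enorm2 v ^ 2 = ∑ i, v i ^ 2 :=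
  Real.sq_sqrt (by positivity)

namespace IsIndicatorOf

variable {n k m : ℕ} {f : Fin n → Fin k} {X : Matrix (Fin n) (Fin k) ℝ}

lemma mul_transpose_apply (hX : IsIndicatorOf f X) (i i' : Fin n) :
    (X * Xᵀ) i i' =
      if f i' = f i then ((univ.filter fun i'' => f i'' = f i).card : ℝ)⁻¹ else 0 := by
  have hcard : (0 : ℝ) ≤ (univ.filter fun i'' => f i'' = f i).card := by positivity
  rw [Matrix.mul_apply, Finset.sum_eq_single (f i)]
  · simp only [transpose_apply, hX.2, if_true]
    split_ifs <;> simp [← sq, Real.sq_sqrt hcard]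
  · intro j _ hj
    simp [hX.2, Ne.symm hj]
  · simp

lemma mul_transpose_mul_apply (hX : IsIndicatorOf f X) (M : Matrix (Fin n) (Fin m) ℝ)
    (i : Fin n) (l : Fin m) :
    (X * Xᵀ * M) i l =
      (∑ i' ∈ univ.filter fun i' => f i' = f i, M i' l) /
        ((univ.filter fun i' => f i' = f i).card : ℝ) := by
  simp only [Matrix.mul_apply, hX.mul_transpose_apply, ite_mul, zero_mul]
  rw [Finset.sum_ite, Finset.sum_const_zero, add_zero, ← Finset.mul_sum, inv_mul_eq_div]

end IsIndicatorOf

/-- the squared k-means cost equals the sum of squared distances of the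
rows of `M` to their cluster centroids. -/
theorem statement7 {n m k : ℕ} (M : Matrix (Fin n) (Fin m) ℝ)
    (f : Fin n → Fin k) (X : Matrix (Fin n) (Fin k) ℝ) (hX : IsIndicatorOf f X)
    (μ : Fin k → Fin m → ℝ)
    (hμ : ∀ j l, μ j l =
      (∑ i ∈ Finset.univ.filter fun i' => f i' = j, M i l) /
        ((Finset.univ.filter fun i' => f i' = j).card : ℝ)) :
    frob (M - X * Xᵀ * M) ^ 2 =
      ∑ j : Fin k, ∑ i ∈ Finset.univ.filter fun i' => f i' = j,
        enorm2 (fun l => M i l - μ j l) ^ 2 := by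
  have hcentroid : ∀ i l, (X * Xᵀ * M) i l = μ (f i) l := fun i l => by
    rw [hX.mul_transpose_mul_apply, hμ]
  calc frob (M - X * Xᵀ * M) ^ 2 = ∑ i, ∑ l, (M i l - μ (f i) l) ^ 2 := by
        simp only [frob_sq, Matrix.sub_apply, hcentroid]
    _ = ∑ j, ∑ i ∈ univ.filter fun i' => f i' = j, ∑ l, (M i l - μ (f i) l) ^ 2 :=
        (Finset.sum_fiberwise_of_maps_to (fun i _ => mem_univ (f i)) _).symm
    _ = _ := by
        refine Finset.sum_congr rfl fun j _ => Finset.sum_congr rfl fun i hi => ?_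
        rw [enorm2_sq, (mem_filter.mp hi).2]
end
end

section
/- Let n ≥ k, d ≥ k, c ≥ 0, δ ≥ 0, ρ ≥ 0, and let d' = d·p be a positive integer with 0 < p ≤ 1. Suppose (i) every singular value σ_i of Φ_tᵀ R satisfies |σ_i − 1| ≤ (√k + c)/√d, (ii) ‖(Ψ_t − Ψ_{t−1}) S_{dp,d}‖_F² ≤ p·(1+δ)·‖H_t − H_{t−1}‖_F², and (iii) ‖H_t − H_{t−1}‖_F ≤ ρ. Then C_{Φ_t} ≤ C_{Θ_t} ≤ C_{Φ_t} + 2·√(k/d)·(√k + c) + 2·√(p(1+δ))·ρ. -/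
open Matrix MeasureTheory ProbabilityTheory Finset

noncomputable section

/-!
Indicator matrices have orthonormal columns, so `X Xᵀ` is an orthogonal projection and the
k-means cost `‖M - X Xᵀ M‖_F` of a fixed `X` is 1-Lipschitz in the features `M`. Since
`Ψ_t = Φ_t (Φ_tᵀ R)` and the singular values of `Φ_tᵀ R` lie within `ε = (√k + c)/√d` of `1`,
passing from `Φ_t` to `Ψ_t` changes the cost of every `X` by at most `ε ‖Φ_t‖_F = ε √k`.
Moreover `Ψ_t - Θ_t = (Ψ_t - Ψ_{t-1}) S_{dp,d}` has norm at most `√(p(1+δ)) ρ`. Comparing the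
optimal assignments for `Φ_t` and `Θ_t` through `Ψ_t` incurs each of the two errors twice.
-/

open scoped Matrix.Norms.Frobenius

theorem Matrix.transpose_mul_sub_proj {l m n : Type*} [Fintype l] [Fintype m] [DecidableEq l]
    {X : Matrix m l ℝ} (hX : Xᵀ * X = 1) (A : Matrix m n ℝ) :
    (A - X * Xᵀ * A)ᵀ * (A - X * Xᵀ * A) = Aᵀ * A - (Xᵀ * A)ᵀ * (Xᵀ * A) := by
  have hXXX : Xᵀ * (X * (Xᵀ * A)) = Xᵀ * A := by rw [← Matrix.mul_assoc, hX, Matrix.one_mul]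
  simp only [transpose_sub, transpose_mul, transpose_transpose, Matrix.sub_mul, Matrix.mul_sub,
    Matrix.mul_assoc, hXXX]
  abel

section Frobenius

variable {l m n : Type*} [Fintype l] [Fintype m] [Fintype n]

theorem Matrix.frobenius_norm_sq_eq_sum (A : Matrix m n ℝ) :
    ‖A‖ ^ 2 = ∑ i, ∑ j, A i j ^ 2 := by
  rw [frobenius_norm_def, ← Real.sqrt_eq_rpow, Real.sq_sqrt (by positivity)]
  simp only [Real.norm_eq_abs, Real.rpow_two, sq_abs]

theorem Matrix.frobenius_norm_sq_eq_trace_transpose_mul (A : Matrix m n ℝ) :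
    ‖A‖ ^ 2 = (Aᵀ * A).trace := by
  rw [frobenius_norm_sq_eq_sum, Finset.sum_comm]
  simp [Matrix.trace, Matrix.mul_apply, sq]

theorem Matrix.frobenius_norm_sq_eq_trace_mul_transpose (A : Matrix m n ℝ) :
    ‖A‖ ^ 2 = (A * Aᵀ).trace := by
  rw [← frobenius_norm_transpose, frobenius_norm_sq_eq_trace_transpose_mul, transpose_transpose]

theorem Matrix.frobenius_norm_sub_proj_sq [DecidableEq l] {X : Matrix m l ℝ} (hX : Xᵀ * X = 1)
    (A : Matrix m n ℝ) : ‖A - X * Xᵀ * A‖ ^ 2 = ‖A‖ ^ 2 - ‖Xᵀ * A‖ ^ 2 := by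
  simp only [frobenius_norm_sq_eq_trace_transpose_mul, transpose_mul_sub_proj hX, trace_sub]

theorem Matrix.frobenius_norm_sub_proj_le [DecidableEq l] {X : Matrix m l ℝ} (hX : Xᵀ * X = 1)
    (A : Matrix m n ℝ) : ‖A - X * Xᵀ * A‖ ≤ ‖A‖ := by
  refine (pow_le_pow_iff_left₀ (norm_nonneg _) (norm_nonneg _) two_ne_zero).1 ?_
  rw [frobenius_norm_sub_proj_sq hX]
  linarith [sq_nonneg ‖Xᵀ * A‖]

theorem Matrix.trace_mul_diagonal_mul_transpose (C : Matrix m n ℝ) (e : n → ℝ) [DecidableEq n] :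
    (C * diagonal e * Cᵀ).trace = ∑ j, e j * ∑ i, C i j ^ 2 := by
  simp only [Matrix.trace, diag_apply, mul_apply, transpose_apply, diagonal_apply, mul_ite,
    mul_zero, Finset.sum_ite_eq', Finset.mem_univ, if_true, Finset.mul_sum]
  rw [Finset.sum_comm]
  exact Finset.sum_congr rfl fun _ _ => Finset.sum_congr rfl fun _ _ => by ring

end Frobenius

section Spectral

variable {m k d : Type*} [Fintype m] [Fintype k] [DecidableEq k] [Fintype d]

theorem Matrix.frobenius_norm_mul_sq_eq_sum_eigenvalues (A : Matrix k d ℝ)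
    (hH : (A * Aᵀ).IsHermitian) (B : Matrix m k ℝ) :
    ‖B * A‖ ^ 2 =
      ∑ j, hH.eigenvalues j * ∑ i, (B * (hH.eigenvectorUnitary : Matrix k k ℝ)) i j ^ 2 := by
  set V : Matrix k k ℝ := ↑hH.eigenvectorUnitary
  have hspec : A * Aᵀ = V * diagonal hH.eigenvalues * Vᵀ := by
    conv_lhs => rw [hH.spectral_theorem, Unitary.conjStarAlgAut_apply]
    rfl
  rw [frobenius_norm_sq_eq_trace_mul_transpose, ← trace_mul_diagonal_mul_transpose]
  calc (B * A * (B * A)ᵀ).trace = (B * (A * Aᵀ) * Bᵀ).trace := by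
        simp only [transpose_mul, Matrix.mul_assoc]
    _ = (B * V * diagonal hH.eigenvalues * (B * V)ᵀ).trace := by
        simp only [hspec, transpose_mul, Matrix.mul_assoc]

theorem Matrix.frobenius_norm_mul_orthogonal {V : Matrix k k ℝ} (hV : V * Vᵀ = 1)
    (B : Matrix m k ℝ) : ‖B * V‖ = ‖B‖ := by
  refine (pow_left_inj₀ (norm_nonneg _) (norm_nonneg _) two_ne_zero).1 ?_
  rw [frobenius_norm_sq_eq_trace_mul_transpose, frobenius_norm_sq_eq_trace_mul_transpose,
    transpose_mul, Matrix.mul_assoc, ← Matrix.mul_assoc V, hV, Matrix.one_mul]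

theorem Matrix.IsHermitian.eigenvectorUnitary_mul_transpose {A : Matrix k k ℝ}
    (hA : A.IsHermitian) :
    (hA.eigenvectorUnitary : Matrix k k ℝ) * (hA.eigenvectorUnitary : Matrix k k ℝ)ᵀ = 1 := by
  rw [← conjTranspose_eq_transpose_of_trivial, ← star_eq_conjTranspose]
  exact mem_unitaryGroup_iff.mp hA.eigenvectorUnitary.2

theorem Matrix.abs_frobenius_norm_mul_sub_le (A : Matrix k d ℝ) (hH : (A * Aᵀ).IsHermitian)
    {ε : ℝ} (hε : 0 ≤ ε) (hs : ∀ i, |√(hH.eigenvalues i) - 1| ≤ ε) (B : Matrix m k ℝ) :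
    |‖B * A‖ - ‖B‖| ≤ ε * ‖B‖ := by
  set w : k → ℝ := fun j => ∑ i, (B * (hH.eigenvectorUnitary : Matrix k k ℝ)) i j ^ 2
  have hw : ∀ j, 0 ≤ w j := fun j => by positivity
  have hBA : ‖B * A‖ ^ 2 = ∑ j, hH.eigenvalues j * w j :=
    frobenius_norm_mul_sq_eq_sum_eigenvalues A hH B
  have hB : ‖B‖ ^ 2 = ∑ j, w j := by
    rw [← frobenius_norm_mul_orthogonal hH.eigenvectorUnitary_mul_transpose B,
      frobenius_norm_sq_eq_sum, Finset.sum_comm]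
  have hnonneg : ∀ j, 0 ≤ hH.eigenvalues j := fun j => by
    have hPSD : (A * Aᵀ).PosSemidef := by
      simpa only [conjTranspose_eq_transpose_of_trivial] using posSemidef_self_mul_conjTranspose A
    exact hPSD.eigenvalues_nonneg j
  -- `max 0 (1 - ε)` keeps the lower bound meaningful when `ε > 1`
  have hlow : ∀ j, max 0 (1 - ε) ^ 2 ≤ hH.eigenvalues j := fun j => by
    rw [← Real.sq_sqrt (hnonneg j)]
    exact pow_le_pow_left₀ (le_max_left _ _)
      (max_le (Real.sqrt_nonneg _) (by linarith [(abs_le.1 (hs j)).1])) 2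
  have hup : ∀ j, hH.eigenvalues j ≤ (1 + ε) ^ 2 := fun j => by
    rw [← Real.sq_sqrt (hnonneg j)]
    exact pow_le_pow_left₀ (Real.sqrt_nonneg _) (by linarith [(abs_le.1 (hs j)).2]) 2
  have hge : max 0 (1 - ε) * ‖B‖ ≤ ‖B * A‖ := by
    refine (pow_le_pow_iff_left₀ (by positivity) (norm_nonneg _) two_ne_zero).1 ?_
    rw [mul_pow, hB, hBA, Finset.mul_sum]
    exact Finset.sum_le_sum fun j _ => mul_le_mul_of_nonneg_right (hlow j) (hw j)
  have hle : ‖B * A‖ ≤ (1 + ε) * ‖B‖ := by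
    refine (pow_le_pow_iff_left₀ (norm_nonneg _) (by positivity) two_ne_zero).1 ?_
    rw [mul_pow, hB, hBA, Finset.mul_sum]
    exact Finset.sum_le_sum fun j _ => mul_le_mul_of_nonneg_right (hup j) (hw j)
  rw [abs_sub_le_iff]
  constructor <;> nlinarith [le_max_right 0 (1 - ε), norm_nonneg B]

end Spectral

theorem rectId_transpose_mul_self {a b : ℕ} (h : b ≤ a) : (rectId a b)ᵀ * rectId a b = 1 := by
  ext j j'
  simp only [rectId, mul_apply, transpose_apply, of_apply, one_apply, Fin.ext_iff, ite_mul,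
    one_mul, zero_mul]
  rw [Finset.sum_eq_single (Fin.castLE h j')]
  · simp [eq_comm]
  · intro i _ hi
    rw [if_neg (c := (i : ℕ) = j') fun hc => hi (Fin.ext hc), ite_self]
  · simp

theorem IsIndicator.transpose_mul_self {n k : ℕ} {X : Matrix (Fin n) (Fin k) ℝ}
    (hX : IsIndicator X) : Xᵀ * X = 1 := by
  obtain ⟨f, hf, hXf⟩ := hX
  ext j j'
  simp only [mul_apply, transpose_apply, one_apply, hXf, ite_mul, mul_ite, zero_mul, mul_zero]
  split_ifs with hjj
  · subst hjj
    have hs : (0 : ℝ) < #{i | f i = j} := by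
      obtain ⟨i, rfl⟩ := hf j
      exact_mod_cast card_pos.2 ⟨i, by simp⟩
    rw [← Finset.sum_filter, Finset.sum_congr rfl fun i hi => if_pos (Finset.mem_filter.1 hi).2,
      Finset.sum_const, nsmul_eq_mul, one_div_mul_one_div, Real.mul_self_sqrt hs.le,
      mul_one_div_cancel hs.ne']
  · refine Finset.sum_eq_zero fun i _ => ?_
    split_ifs with h1 h2 <;> first | rfl | exact absurd (h2.symm.trans h1) hjj

theorem frob_eq_norm {a b : ℕ} (M : Matrix (Fin a) (Fin b) ℝ) : frob M = ‖M‖ := by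
  rw [frob, ← frobenius_norm_sq_eq_sum, Real.sqrt_sq (norm_nonneg _)]

section KMeans

variable {n k r : ℕ}

theorem kmeansCost_eq_norm (M : Matrix (Fin n) (Fin r) ℝ) (X : Matrix (Fin n) (Fin k) ℝ) :
    kmeansCost M X = ‖M - X * Xᵀ * M‖ :=
  frob_eq_norm _

theorem kmeansCost_le_add_norm_sub {X : Matrix (Fin n) (Fin k) ℝ} (hX : Xᵀ * X = 1)
    (M N : Matrix (Fin n) (Fin r) ℝ) : kmeansCost M X ≤ kmeansCost N X + ‖M - N‖ := by
  have hsplit : M - X * Xᵀ * M = (N - X * Xᵀ * N) + ((M - N) - X * Xᵀ * (M - N)) := by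
    rw [Matrix.mul_sub]
    abel
  rw [kmeansCost_eq_norm, kmeansCost_eq_norm, hsplit]
  exact (norm_add_le _ _).trans (add_le_add_right (frobenius_norm_sub_proj_le hX _) _)

theorem kmeansCost_le_of_isOptAssign {M N : Matrix (Fin n) (Fin r) ℝ}
    {X Y : Matrix (Fin n) (Fin k) ℝ} (hX : IsOptAssign N X) (hY : IsIndicator Y) :
    kmeansCost M X ≤ kmeansCost M Y + 2 * ‖M - N‖ := by
  have hMN := kmeansCost_le_add_norm_sub hX.1.transpose_mul_self M N
  have hNM := kmeansCost_le_add_norm_sub hY.transpose_mul_self N M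
  rw [norm_sub_rev] at hNM
  linarith [hX.2 Y hY]

theorem abs_kmeansCost_mul_sub_le {d : ℕ} (A : Matrix (Fin k) (Fin d) ℝ)
    (hH : (A * Aᵀ).IsHermitian) {ε : ℝ} (hε : 0 ≤ ε) (hs : ∀ i, |√(hH.eigenvalues i) - 1| ≤ ε)
    {X : Matrix (Fin n) (Fin r) ℝ} (hX : Xᵀ * X = 1) (M : Matrix (Fin n) (Fin k) ℝ) :
    |kmeansCost (M * A) X - kmeansCost M X| ≤ ε * ‖M‖ := by
  have hMA : M * A - X * Xᵀ * (M * A) = (M - X * Xᵀ * M) * A := by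
    simp only [Matrix.sub_mul, Matrix.mul_assoc]
  rw [kmeansCost_eq_norm, kmeansCost_eq_norm, hMA]
  exact (abs_frobenius_norm_mul_sub_le A hH hε hs _).trans
    (mul_le_mul_of_nonneg_left (frobenius_norm_sub_proj_le hX M) hε)

end KMeans

theorem Real.le_sqrt_mul_of_sq_le_mul_sq {x q f ρ : ℝ} (hx : 0 ≤ x) (hf : 0 ≤ f)
    (h : x ^ 2 ≤ q * f ^ 2) (hfρ : f ≤ ρ) : x ≤ √q * ρ :=
  calc x = √(x ^ 2) := (Real.sqrt_sq hx).symm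
    _ ≤ √(q * f ^ 2) := Real.sqrt_le_sqrt h
    _ = √q * f := by rw [Real.sqrt_mul' q (sq_nonneg f), Real.sqrt_sq hf]
    _ ≤ √q * ρ := mul_le_mul_of_nonneg_left hfρ (Real.sqrt_nonneg q)

theorem statement12_general {n k d : ℕ} (hnk : k ≤ n)
    (p δ c ρ : ℝ) (hc : 0 ≤ c)
    (U2 : Matrix (Fin n) (Fin n) ℝ) (hU2 : U2ᵀ * U2 = 1)
    (R : Matrix (Fin n) (Fin d) ℝ)
    (Φ1 Φ2 : Matrix (Fin n) (Fin k) ℝ)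
    (hΦ2 : Φ2 = U2 * rectId n k)
    (Ψ1 Ψ2 : Matrix (Fin n) (Fin d) ℝ)
    (hΨ2 : Ψ2 = Φ2 * Φ2ᵀ * R)
    (S : Matrix (Fin d) (Fin d) ℝ)
    (Θ : Matrix (Fin n) (Fin d) ℝ) (hΘ : Θ = Ψ1 * S + Ψ2 * (1 - S))
    (hH : (Φ2ᵀ * R * (Φ2ᵀ * R)ᵀ).IsHermitian)
    (hsing : ∀ i : Fin k,
      |Real.sqrt (hH.eigenvalues i) - 1| ≤ (Real.sqrt k + c) / Real.sqrt d)
    (hJL : frob ((Ψ2 - Ψ1) * S) ^ 2 ≤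
      p * (1 + δ) * frob (Φ2 * Φ2ᵀ - Φ1 * Φ1ᵀ) ^ 2)
    (hsim : frob (Φ2 * Φ2ᵀ - Φ1 * Φ1ᵀ) ≤ ρ)
    (XΦ XΘ : Matrix (Fin n) (Fin k) ℝ)
    (hXΦ : IsOptAssign Φ2 XΦ) (hXΘ : IsOptAssign Θ XΘ) :
    kmeansCost Φ2 XΦ ≤ kmeansCost Φ2 XΘ ∧
      kmeansCost Φ2 XΘ ≤ kmeansCost Φ2 XΦ +
        2 * Real.sqrt ((k : ℝ) / d) * (Real.sqrt k + c) +
        2 * Real.sqrt (p * (1 + δ)) * ρ := by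
  have hΦ2orth : Φ2ᵀ * Φ2 = 1 := by
    rw [hΦ2, transpose_mul, Matrix.mul_assoc, ← Matrix.mul_assoc U2ᵀ, hU2, Matrix.one_mul,
      rectId_transpose_mul_self hnk]
  have hΦ2norm : ‖Φ2‖ = √k := by
    rw [← Real.sqrt_sq (norm_nonneg Φ2), frobenius_norm_sq_eq_trace_transpose_mul, hΦ2orth,
      trace_one, Fintype.card_fin]
  have hsketch : ∀ X : Matrix (Fin n) (Fin k) ℝ, IsIndicator X →
      |kmeansCost Ψ2 X - kmeansCost Φ2 X| ≤ √(k / d) * (√k + c) := fun X hX => by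
    have hε : 0 ≤ (√k + c) / √d := by positivity
    rw [hΨ2, Matrix.mul_assoc, Real.sqrt_div' _ (Nat.cast_nonneg _)]
    convert abs_kmeansCost_mul_sub_le _ hH hε hsing hX.transpose_mul_self Φ2 using 1
    rw [hΦ2norm]
    ring
  have hdrift : ‖Ψ2 - Θ‖ ≤ √(p * (1 + δ)) * ρ := by
    have hΨΘ : Ψ2 - Θ = (Ψ2 - Ψ1) * S := by
      rw [hΘ, Matrix.mul_sub, Matrix.mul_one, Matrix.sub_mul]
      abel
    rw [hΨΘ]
    simp only [frob_eq_norm] at hJL hsim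
    exact Real.le_sqrt_mul_of_sq_le_mul_sq (norm_nonneg _) (norm_nonneg _) hJL hsim
  have hopt := kmeansCost_le_of_isOptAssign (M := Ψ2) hXΘ hXΦ.1
  refine ⟨hXΦ.2 XΘ hXΘ.1, ?_⟩
  linarith [abs_le.1 (hsketch XΘ hXΘ.1), abs_le.1 (hsketch XΦ hXΦ.1)]

/-- deterministic dynamic bound
`C_{Φ_t} ≤ C_{Θ_t} ≤ C_{Φ_t} + 2√(k/d)(√k + c) + 2√(p(1+δ)) ρ`. -/
theorem statement12 {n k d d' : ℕ} (hnk : k ≤ n) (hkd : k ≤ d) (hd' : 0 < d')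
    (p δ c ρ : ℝ) (hc : 0 ≤ c) (hδ : 0 ≤ δ)
    (hp0 : 0 < p) (hp1 : p ≤ 1) (hpd : (d' : ℝ) = d * p)
    (U1 U2 : Matrix (Fin n) (Fin n) ℝ) (hU1 : U1ᵀ * U1 = 1) (hU2 : U2ᵀ * U2 = 1)
    (R : Matrix (Fin n) (Fin d) ℝ)
    (Φ1 Φ2 : Matrix (Fin n) (Fin k) ℝ)
    (hΦ1 : Φ1 = U1 * rectId n k) (hΦ2 : Φ2 = U2 * rectId n k)
    (Ψ1 Ψ2 : Matrix (Fin n) (Fin d) ℝ)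
    (hΨ1 : Ψ1 = Φ1 * Φ1ᵀ * R) (hΨ2 : Ψ2 = Φ2 * Φ2ᵀ * R)
    (S : Matrix (Fin d) (Fin d) ℝ) (hS : S = rectId d d' * rectId d' d)
    (Θ : Matrix (Fin n) (Fin d) ℝ) (hΘ : Θ = Ψ1 * S + Ψ2 * (1 - S))
    (hH : (Φ2ᵀ * R * (Φ2ᵀ * R)ᵀ).IsHermitian)
    (hsing : ∀ i : Fin k,
      |Real.sqrt (hH.eigenvalues i) - 1| ≤ (Real.sqrt k + c) / Real.sqrt d)
    (hJL : frob ((Ψ2 - Ψ1) * S) ^ 2 ≤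
      p * (1 + δ) * frob (Φ2 * Φ2ᵀ - Φ1 * Φ1ᵀ) ^ 2)
    (hsim : frob (Φ2 * Φ2ᵀ - Φ1 * Φ1ᵀ) ≤ ρ)
    (XΦ XΘ : Matrix (Fin n) (Fin k) ℝ)
    (hXΦ : IsOptAssign Φ2 XΦ) (hXΘ : IsOptAssign Θ XΘ) :
    kmeansCost Φ2 XΦ ≤ kmeansCost Φ2 XΘ ∧
      kmeansCost Φ2 XΘ ≤ kmeansCost Φ2 XΦ +
        2 * Real.sqrt ((k : ℝ) / d) * (Real.sqrt k + c) +
        2 * Real.sqrt (p * (1 + δ)) * ρ :=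
  statement12_general hnk p δ c ρ hc U2 hU2 R Φ1 Φ2 hΦ2 Ψ1 Ψ2 hΨ2 S Θ hΘ hH hsing hJL hsim XΦ XΘ hXΦ
    hXΘ
end
end
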